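/- If a measurement scheme Q = {P_1,…,P_l} with outcome set {1,…,m} determines any pure state among all states, then there exists ε > 0 such that every measurement scheme Q′ = {P′_1,…,P′_l} with the same outcome set satisfying ‖M_Q − M_{Q′}‖_∞ < ε also determines any pure state among all states. -/

import Mathlib

open Matrix ComplexOrder

noncomputable def frobNorm {n m : Type*} [Fintype n] [Fintype m] {𝕜 : Type*} [RCLike 𝕜]
    (X : Matrix n m 𝕜) : ℝ :=
  Real.sqrt (∑ i, ∑ j, ‖X i j‖ ^ 2)

def IsPOVM {d m : ℕ} (P : Fin m → Matrix (Fin d) (Fin d) ℂ) : Prop :=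
  (∀ j, (P j).PosSemidef) ∧ (∑ j, P j) = 1

def IsMeasScheme {d l m : ℕ} (Q : Fin l → Fin m → Matrix (Fin d) (Fin d) ℂ) : Prop :=
  ∀ i, IsPOVM (Q i)

noncomputable def measMap {d l m : ℕ} (Q : Fin l → Fin m → Matrix (Fin d) (Fin d) ℂ)
    (X : Matrix (Fin d) (Fin d) ℂ) : Matrix (Fin l) (Fin m) ℝ :=
  Matrix.of fun i j => (Matrix.trace (X * Q i j)).re

noncomputable def pureState {d : ℕ} (ψ : Fin d → ℂ) : Matrix (Fin d) (Fin d) ℂ :=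
  Matrix.vecMulVec ψ (star ψ)

def IsState {d : ℕ} (ρ : Matrix (Fin d) (Fin d) ℂ) : Prop :=
  ρ.PosSemidef ∧ ρ.trace = 1

def DeterminesPure {d l m : ℕ} (Q : Fin l → Fin m → Matrix (Fin d) (Fin d) ℂ) : Prop :=
  ∀ ψ : Fin d → ℂ, (∑ k, Complex.normSq (ψ k)) = 1 →
    ∀ ρ : Matrix (Fin d) (Fin d) ℂ, IsState ρ →
      measMap Q (pureState ψ) = measMap Q ρ → ρ = pureState ψ

noncomputable def posEigCount {d : ℕ} {X : Matrix (Fin d) (Fin d) ℂ} (hX : X.IsHermitian) : ℕ :=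
  Nat.card {i : Fin d // 0 < hX.eigenvalues i}

def Kset (d : ℕ) : Set (Matrix (Fin d) (Fin d) ℂ) :=
  {X | ∃ hX : X.IsHermitian, posEigCount hX ≤ 1 ∧ frobNorm X = 1}

noncomputable def opNormHerm {d l m : ℕ}
    (T : Matrix (Fin d) (Fin d) ℂ → Matrix (Fin l) (Fin m) ℝ) : ℝ :=
  sSup {r : ℝ | ∃ X : Matrix (Fin d) (Fin d) ℂ, X.IsHermitian ∧ frobNorm X = 1 ∧ r = frobNorm (T X)}

/-!
Call a trace-zero Hermitian matrix of Frobenius norm one a *pure direction* if it lies below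
`t |φ⟩⟨φ|` for some unit vector `φ` and some `t ∈ [0, 1]`. For a unit vector `ψ` and a state
`ρ ≠ |ψ⟩⟨ψ|`, the normalized difference `X` of `|ψ⟩⟨ψ|` and `ρ` lies below a multiple of
`|ψ⟩⟨ψ|`, so `X` has at most one positive eigenvalue; it therefore lies below `λ |u⟩⟨u|` for its
top eigenpair `(λ, u)`, and `λ ≤ ‖X‖ = 1`. Conversely, a pure direction `X ≤ t |φ⟩⟨φ|` equals
`t (|φ⟩⟨φ| - ρ)` with the state `ρ = (t |φ⟩⟨φ| - X) / t`. Hence `Q` determines pure states iff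
`M_Q` has no zero on the set `K` of pure directions. The bound `t ≤ 1` makes `K` compact, so
`‖M_Q X‖ ≥ ε > 0` on `K`; if `M_{Q'} X = 0` for some `X ∈ K`, then
`ε ≤ ‖M_Q X‖ = ‖(M_Q - M_{Q'}) X‖ ≤ ‖M_Q - M_{Q'}‖`.
-/

section FrobNorm
variable {n m 𝕜 : Type*} [Fintype n] [Fintype m] [RCLike 𝕜]

lemma frobNorm_smul (c : 𝕜) (X : Matrix n m 𝕜) : frobNorm (c • X) = ‖c‖ * frobNorm X := by
  simp only [frobNorm, Matrix.smul_apply, norm_smul, mul_pow, ← Finset.mul_sum]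
  rw [Real.sqrt_mul (by positivity), Real.sqrt_sq (norm_nonneg _)]

lemma norm_le_frobNorm (X : Matrix n m 𝕜) (i : n) (j : m) : ‖X i j‖ ≤ frobNorm X := by
  refine Real.le_sqrt_of_sq_le ?_
  calc ‖X i j‖ ^ 2 ≤ ∑ j', ‖X i j'‖ ^ 2 :=
        Finset.single_le_sum (f := fun j' => ‖X i j'‖ ^ 2) (fun _ _ => by positivity)
          (Finset.mem_univ j)
    _ ≤ ∑ i', ∑ j', ‖X i' j'‖ ^ 2 :=
        Finset.single_le_sum (f := fun i' => ∑ j', ‖X i' j'‖ ^ 2) (fun _ _ => by positivity)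
          (Finset.mem_univ i)

lemma frobNorm_eq_zero_iff {X : Matrix n m 𝕜} : frobNorm X = 0 ↔ X = 0 := by
  refine ⟨fun h => Matrix.ext fun i j => norm_le_zero_iff.mp (h ▸ norm_le_frobNorm X i j), ?_⟩
  rintro rfl
  simp [frobNorm]

lemma frobNorm_pos {X : Matrix n m 𝕜} (hX : X ≠ 0) : 0 < frobNorm X :=
  (Real.sqrt_nonneg _).lt_of_ne' (frobNorm_eq_zero_iff.not.mpr hX)

lemma continuous_frobNorm : Continuous (frobNorm : Matrix n m 𝕜 → ℝ) := by
  unfold frobNorm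
  fun_prop

lemma isCompact_setOf_frobNorm_eq (r : ℝ) : IsCompact {X : Matrix n m 𝕜 | frobNorm X = r} :=
  (isCompact_closedBall (0 : 𝕜) r).matrix.of_isClosed_subset
    (isClosed_eq continuous_frobNorm continuous_const)
    fun X hX i j => by simpa [hX.symm] using norm_le_frobNorm X i j

end FrobNorm

lemma isClosed_setOf_posSemidef {n 𝕜 : Type*} [Fintype n] [RCLike 𝕜] :
    IsClosed {M : Matrix n n 𝕜 | M.PosSemidef} := by
  simp only [Matrix.posSemidef_iff_dotProduct_mulVec, Set.ofPred_and, Set.ofPred_forall]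
  exact (isClosed_eq continuous_id.matrix_conjTranspose continuous_id).inter
    (isClosed_iInter fun x => isClosed_le continuous_const
      (continuous_const.dotProduct (continuous_id.matrix_mulVec continuous_const)))

section MeasMap
variable {d l m : ℕ} (Q : Fin l → Fin m → Matrix (Fin d) (Fin d) ℂ)

lemma measMap_sub (X Y : Matrix (Fin d) (Fin d) ℂ) :
    measMap Q (X - Y) = measMap Q X - measMap Q Y := by
  ext i j
  simp [measMap, Matrix.sub_mul]

lemma measMap_real_smul (c : ℝ) (X : Matrix (Fin d) (Fin d) ℂ) :
    measMap Q ((c : ℂ) • X) = c • measMap Q X := by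
  ext i j
  simp [measMap]

lemma continuous_measMap : Continuous (measMap Q) :=
  continuous_matrix fun _ _ =>
    Complex.continuous_re.comp (continuous_id.matrix_mul continuous_const).matrix_trace

end MeasMap

section PureState
variable {d : ℕ}

lemma pureState_isHermitian (ψ : Fin d → ℂ) : (pureState ψ).IsHermitian := by
  ext i j
  simp [pureState, Matrix.vecMulVec_apply, mul_comm]

lemma trace_pureState (ψ : Fin d → ℂ) :
    (pureState ψ).trace = ((∑ k, Complex.normSq (ψ k) : ℝ) : ℂ) := by
  simp [pureState, Matrix.trace, Matrix.vecMulVec_apply, Complex.mul_conj]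

lemma continuous_pureState : Continuous (pureState : (Fin d → ℂ) → Matrix (Fin d) (Fin d) ℂ) :=
  continuous_id.matrix_vecMulVec continuous_star

lemma isCompact_setOf_sum_normSq_eq_one :
    IsCompact {ψ : Fin d → ℂ | ∑ k, Complex.normSq (ψ k) = 1} := by
  refine (isCompact_closedBall (0 : Fin d → ℂ) 1).of_isClosed_subset
    (isClosed_eq (by fun_prop) continuous_const) fun ψ hψ => ?_
  rw [mem_closedBall_zero_iff, pi_norm_le_iff_of_nonneg zero_le_one]
  intro k
  rw [← sq_le_one_iff₀ (norm_nonneg _), Complex.sq_norm, ← Set.mem_ofPred.mp hψ]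
  exact Finset.single_le_sum (f := fun k => Complex.normSq (ψ k))
    (fun _ _ => Complex.normSq_nonneg _) (Finset.mem_univ k)

end PureState

section Spectral
variable {d : ℕ}

lemma star_mul_pureState_mul (U : Matrix (Fin d) (Fin d) ℂ) (ψ : Fin d → ℂ) :
    star U * pureState ψ * U = pureState (star U *ᵥ ψ) := by
  rw [pureState, pureState, mul_vecMulVec, vecMulVec_mul, star_mulVec, ← star_eq_conjTranspose,
    star_star]

lemma eq_of_posSemidef_smul_pureState_sub_diagonal {s : ℝ} {b : Fin d → ℂ} {μ : Fin d → ℝ}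
    (h : ((s : ℂ) • pureState b - diagonal fun k => (μ k : ℂ)).PosSemidef) {i j : Fin d}
    (hi : 0 < μ i) (hj : 0 < μ j) : i = j := by
  by_contra hij
  -- the principal `{i, j}` minor of a rank-one matrix minus `diagonal μ` is too small
  set n : Fin d → ℝ := fun k => Complex.normSq (b k)
  have hentry : ∀ k, (((s : ℂ) • pureState b - diagonal fun k => (μ k : ℂ)) k k) =
      ((s * n k - μ k : ℝ) : ℂ) := fun k => by
    simp [n, pureState, vecMulVec_apply, Complex.mul_conj]
  have hminor : ((((s : ℂ) • pureState b - diagonal fun k => (μ k : ℂ)).submatrix ![i, j]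
      ![i, j]).det) = (((s * n i - μ i) * (s * n j - μ j) - s ^ 2 * n i * n j : ℝ) : ℂ) := by
    rw [det_fin_two]
    simp only [submatrix_apply, Matrix.cons_val_zero, Matrix.cons_val_one, hentry]
    simp [n, pureState, vecMulVec_apply, hij, Ne.symm hij, ← Complex.mul_conj]
    ring
  have hdet := (h.submatrix ![i, j]).det_nonneg
  have hii := h.diag_nonneg (i := i)
  have hjj := h.diag_nonneg (i := j)
  rw [hminor, Complex.zero_le_real] at hdet
  rw [hentry, Complex.zero_le_real] at hii hjj
  nlinarith [mul_pos hi hj]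

variable {X : Matrix (Fin d) (Fin d) ℂ} (hX : X.IsHermitian)

lemma sum_eigenvalues_sq :
    ∑ i, hX.eigenvalues i ^ 2 = ∑ a, ∑ b, ‖X a b‖ ^ 2 := by
  have hspec : (X * X).trace = ∑ i, ((hX.eigenvalues i ^ 2 : ℝ) : ℂ) := by
    conv_lhs => rw [hX.spectral_theorem, ← map_mul]
    rw [Unitary.conjStarAlgAut_apply, trace_mul_cycle, Unitary.coe_star_mul_self, one_mul,
      diagonal_mul_diagonal, trace_diagonal]
    simp [sq]
  have hentry : (X * X).trace = ∑ a, ∑ b, ((‖X a b‖ ^ 2 : ℝ) : ℂ) := by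
    simp only [trace, diag, mul_apply]
    refine Finset.sum_congr rfl fun a _ => Finset.sum_congr rfl fun b _ => ?_
    rw [← hX.apply b a]
    simp [Complex.mul_conj, Complex.normSq_eq_norm_sq]
  exact_mod_cast hspec.symm.trans hentry

lemma eigenvalues_le_frobNorm (i : Fin d) : hX.eigenvalues i ≤ frobNorm X := by
  refine Real.le_sqrt_of_sq_le ?_
  rw [← sum_eigenvalues_sq hX]
  exact Finset.single_le_sum (f := fun k => hX.eigenvalues k ^ 2) (fun _ _ => sq_nonneg _)
    (Finset.mem_univ i)

lemma star_eigenvectorUnitary_mul_sub_mul (s : ℝ) (ψ : Fin d → ℂ) :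
    star (hX.eigenvectorUnitary : Matrix (Fin d) (Fin d) ℂ) * ((s : ℂ) • pureState ψ - X) *
        hX.eigenvectorUnitary =
      (s : ℂ) • pureState (star (hX.eigenvectorUnitary : Matrix (Fin d) (Fin d) ℂ) *ᵥ ψ) -
        diagonal fun k => (hX.eigenvalues k : ℂ) := by
  rw [mul_sub, sub_mul, mul_smul_comm, smul_mul_assoc, star_mul_pureState_mul,
    ← Unitary.conjStarAlgAut_star_apply (S := ℂ), hX.conjStarAlgAut_star_eigenvectorUnitary]
  rfl

lemma posSemidef_smul_pureState_sub_iff (s : ℝ) (ψ : Fin d → ℂ) :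
    ((s : ℂ) • pureState ψ - X).PosSemidef ↔
      ((s : ℂ) • pureState (star (hX.eigenvectorUnitary : Matrix (Fin d) (Fin d) ℂ) *ᵥ ψ) -
        diagonal fun k => (hX.eigenvalues k : ℂ)).PosSemidef := by
  rw [← star_eigenvectorUnitary_mul_sub_mul, Unitary.isUnit_coe.posSemidef_star_left_conjugate_iff]

lemma exists_eigenvalues_pos (htr : X.trace = 0) (hne : X ≠ 0) : ∃ i, 0 < hX.eigenvalues i := by
  by_contra! hnonpos
  have hsum : ∑ i, hX.eigenvalues i = 0 := by
    have h := hX.trace_eq_sum_eigenvalues.symm.trans htr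
    rwa [← RCLike.ofReal_sum, RCLike.ofReal_eq_zero] at h
  apply hne
  rw [← hX.eigenvalues_eq_zero_iff]
  ext i
  exact (Finset.sum_eq_zero_iff_of_nonpos fun k _ => hnonpos k).mp hsum i (Finset.mem_univ i)

lemma eigenvalues_nonpos_of_posSemidef {s : ℝ} {ψ : Fin d → ℂ}
    (hdom : ((s : ℂ) • pureState ψ - X).PosSemidef) {i k : Fin d} (hi : 0 < hX.eigenvalues i)
    (hki : k ≠ i) : hX.eigenvalues k ≤ 0 := by
  by_contra! hk
  exact hki (eq_of_posSemidef_smul_pureState_sub_diagonal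
    ((posSemidef_smul_pureState_sub_iff hX s ψ).mp hdom) hk hi)

lemma posSemidef_eigenvalue_smul_pureState_sub {i : Fin d}
    (hnonpos : ∀ k ≠ i, hX.eigenvalues k ≤ 0) :
    ((hX.eigenvalues i : ℂ) • pureState (hX.eigenvectorBasis i) - X).PosSemidef := by
  rw [posSemidef_smul_pureState_sub_iff hX, hX.star_eigenvectorUnitary_mulVec]
  have hdiag : ((hX.eigenvalues i : ℂ) • pureState (Pi.single i 1) -
      diagonal fun k => (hX.eigenvalues k : ℂ)) =
      diagonal fun k =>
        (((Pi.single i (hX.eigenvalues i) : Fin d → ℝ) k - hX.eigenvalues k : ℝ) : ℂ) := by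
    ext a b
    simp only [pureState, vecMulVec_apply, Pi.single_apply, diagonal_apply, Matrix.sub_apply,
      Matrix.smul_apply, Pi.star_apply]
    split_ifs <;> simp_all
  rw [hdiag, posSemidef_diagonal_iff]
  intro k
  by_cases hki : k = i
  · simp [hki]
  · simp only [Pi.single_eq_of_ne hki, zero_sub, Complex.ofReal_neg]
    exact neg_nonneg.mpr (Complex.real_le_real.mpr (hnonpos k hki))

lemma sum_normSq_eigenvectorBasis (i : Fin d) :
    ∑ k, Complex.normSq (hX.eigenvectorBasis i k) = 1 := by
  have := hX.eigenvectorBasis.orthonormal.1 i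
  rw [EuclideanSpace.norm_eq, Real.sqrt_eq_one] at this
  simpa [Complex.normSq_eq_norm_sq] using this

end Spectral

lemma exists_smul_pureState_sub_posSemidef {d : ℕ} {X : Matrix (Fin d) (Fin d) ℂ}
    (hX : X.IsHermitian) (htr : X.trace = 0) (hne : X ≠ 0) {s : ℝ} {ψ : Fin d → ℂ}
    (hdom : ((s : ℂ) • pureState ψ - X).PosSemidef) :
    ∃ t ∈ Set.Icc 0 (frobNorm X), ∃ φ : Fin d → ℂ, ∑ k, Complex.normSq (φ k) = 1 ∧
      ((t : ℂ) • pureState φ - X).PosSemidef := by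
  obtain ⟨i, hi⟩ := exists_eigenvalues_pos hX htr hne
  exact ⟨hX.eigenvalues i, ⟨hi.le, eigenvalues_le_frobNorm hX i⟩, hX.eigenvectorBasis i,
    sum_normSq_eigenvectorBasis hX i, posSemidef_eigenvalue_smul_pureState_sub hX
      fun k hki => eigenvalues_nonpos_of_posSemidef hX hdom hi hki⟩

def pureDiffDirections (d : ℕ) : Set (Matrix (Fin d) (Fin d) ℂ) :=
  {X | X.trace = 0 ∧ frobNorm X = 1 ∧ ∃ t ∈ Set.Icc (0 : ℝ) 1, ∃ φ : Fin d → ℂ,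
    ∑ k, Complex.normSq (φ k) = 1 ∧ ((t : ℂ) • pureState φ - X).PosSemidef}

section PureDiffDirections
variable {d : ℕ}

lemma smul_pureState_sub_mem_pureDiffDirections {ψ : Fin d → ℂ}
    (hψ : ∑ k, Complex.normSq (ψ k) = 1) {ρ : Matrix (Fin d) (Fin d) ℂ} (hρ : IsState ρ)
    (hne : ρ ≠ pureState ψ) :
    (((frobNorm (pureState ψ - ρ))⁻¹ : ℝ) : ℂ) • (pureState ψ - ρ) ∈ pureDiffDirections d := by
  set c : ℝ := (frobNorm (pureState ψ - ρ))⁻¹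
  have hc : 0 < c := inv_pos.mpr (frobNorm_pos (sub_ne_zero.mpr hne.symm))
  have hfrob : frobNorm ((c : ℂ) • (pureState ψ - ρ)) = 1 := by
    rw [frobNorm_smul, Complex.norm_real, Real.norm_of_nonneg hc.le]
    exact inv_mul_cancel₀ (inv_pos.mp hc).ne'
  have htr : ((c : ℂ) • (pureState ψ - ρ)).trace = 0 := by
    rw [trace_smul, trace_sub, trace_pureState, hψ, hρ.2]
    simp
  have hdom : ((c : ℂ) • pureState ψ - (c : ℂ) • (pureState ψ - ρ)).PosSemidef := by
    rw [← smul_sub, sub_sub_cancel]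
    exact hρ.1.smul (Complex.zero_le_real.mpr hc.le)
  have hherm : ((c : ℂ) • (pureState ψ - ρ)).IsHermitian :=
    ((pureState_isHermitian ψ).sub hρ.1.1).smul (Complex.conj_ofReal c)
  have hX0 : (c : ℂ) • (pureState ψ - ρ) ≠ 0 := fun h => by
    rw [h, frobNorm_eq_zero_iff.mpr rfl] at hfrob
    exact zero_ne_one hfrob
  obtain ⟨t, ht, φ, hφ, hpsd⟩ := exists_smul_pureState_sub_posSemidef hherm htr hX0 hdom
  exact ⟨htr, hfrob, t, hfrob ▸ ht, φ, hφ, hpsd⟩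

lemma exists_eq_smul_pureState_sub_of_mem {X : Matrix (Fin d) (Fin d) ℂ}
    (hX : X ∈ pureDiffDirections d) :
    ∃ s : ℝ, 0 < s ∧ ∃ ψ : Fin d → ℂ, ∑ k, Complex.normSq (ψ k) = 1 ∧
      ∃ ρ, IsState ρ ∧ X = (s : ℂ) • (pureState ψ - ρ) := by
  obtain ⟨htr, hfrob, t, ⟨ht0, -⟩, φ, hφ, hP⟩ := hX
  have htrP : ((t : ℂ) • pureState φ - X).trace = t := by
    rw [trace_sub, trace_smul, trace_pureState, hφ, htr]
    simp
  have ht : 0 < t := by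
    refine ht0.lt_of_ne fun ht => ?_
    have hP0 := hP.trace_eq_zero_iff.mp (by rw [htrP, ← ht]; simp)
    rw [← ht, Complex.ofReal_zero, zero_smul, zero_sub, neg_eq_zero] at hP0
    rw [hP0, frobNorm_eq_zero_iff.mpr rfl] at hfrob
    exact zero_ne_one hfrob
  have ht' : (t : ℂ) ≠ 0 := Complex.ofReal_ne_zero.mpr ht.ne'
  refine ⟨t, ht, φ, hφ, ((t⁻¹ : ℝ) : ℂ) • ((t : ℂ) • pureState φ - X),
    ⟨hP.smul (Complex.zero_le_real.mpr (inv_nonneg.mpr ht0)), ?_⟩, ?_⟩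
  · rw [trace_smul, htrP, smul_eq_mul, Complex.ofReal_inv, inv_mul_cancel₀ ht']
  · rw [smul_sub (t : ℂ), smul_smul, Complex.ofReal_inv, mul_inv_cancel₀ ht', one_smul,
      sub_sub_cancel]

lemma isHermitian_of_mem_pureDiffDirections {X : Matrix (Fin d) (Fin d) ℂ}
    (hX : X ∈ pureDiffDirections d) : X.IsHermitian := by
  obtain ⟨-, -, t, -, φ, -, hP⟩ := hX
  simpa using ((pureState_isHermitian φ).smul (Complex.conj_ofReal t)).sub hP.1

end PureDiffDirections

lemma isCompact_pureDiffDirections (d : ℕ) : IsCompact (pureDiffDirections d) := by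
  have hclosed : IsClosed {p : Matrix (Fin d) (Fin d) ℂ × (Fin d → ℂ) × ℝ |
      p.1.trace = 0 ∧ ((p.2.2 : ℂ) • pureState p.2.1 - p.1).PosSemidef} :=
    (isClosed_eq continuous_fst.matrix_trace continuous_const).inter <|
      isClosed_setOf_posSemidef.preimage <|
        ((Complex.continuous_ofReal.comp (continuous_snd.comp continuous_snd)).smul
          (continuous_pureState.comp (continuous_fst.comp continuous_snd))).sub continuous_fst
  have hW := ((isCompact_setOf_frobNorm_eq 1).prod
    (isCompact_setOf_sum_normSq_eq_one.prod (isCompact_Icc (a := 0) (b := 1)))).inter_right hclosed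
  convert hW.image continuous_fst using 1
  ext X
  simp only [pureDiffDirections, Set.mem_ofPred_eq, Set.mem_image, Set.mem_inter_iff,
    Set.mem_prod, Prod.exists]
  constructor
  · rintro ⟨htr, hfrob, t, ht, φ, hφ, hP⟩
    exact ⟨X, φ, t, ⟨⟨hfrob, hφ, ht⟩, htr, hP⟩, rfl⟩
  · rintro ⟨X, φ, t, ⟨⟨hfrob, hφ, ht⟩, htr, hP⟩, rfl⟩
    exact ⟨htr, hfrob, t, ht, φ, hφ, hP⟩

lemma determinesPure_iff {l m d : ℕ} (Q : Fin l → Fin m → Matrix (Fin d) (Fin d) ℂ) :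
    DeterminesPure Q ↔ ∀ X ∈ pureDiffDirections d, measMap Q X ≠ 0 := by
  constructor
  · intro hQ X hX hX0
    obtain ⟨s, hs, ψ, hψ, ρ, hρ, rfl⟩ := exists_eq_smul_pureState_sub_of_mem hX
    rw [measMap_real_smul, measMap_sub, smul_eq_zero, sub_eq_zero] at hX0
    have hρψ := hQ ψ hψ ρ hρ (hX0.resolve_left hs.ne')
    have hfrob := hX.2.1
    rw [hρψ, sub_self, smul_zero, frobNorm_eq_zero_iff.mpr rfl] at hfrob
    exact zero_ne_one hfrob
  · intro hQ ψ hψ ρ hρ hmeas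
    by_contra hne
    refine hQ _ (smul_pureState_sub_mem_pureDiffDirections hψ hρ hne) ?_
    rw [measMap_real_smul, measMap_sub, hmeas, sub_self, smul_zero]

lemma frobNorm_le_opNormHerm {l m d : ℕ}
    {T : Matrix (Fin d) (Fin d) ℂ → Matrix (Fin l) (Fin m) ℝ} (hT : Continuous T)
    {X : Matrix (Fin d) (Fin d) ℂ} (hX : X.IsHermitian) (hfrob : frobNorm X = 1) :
    frobNorm (T X) ≤ opNormHerm T := by
  have hbdd := ((isCompact_setOf_frobNorm_eq 1).image (continuous_frobNorm.comp hT)).bddAbove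
  refine le_csSup (hbdd.mono ?_) ⟨X, hX, hfrob, rfl⟩
  rintro r ⟨Y, -, hY, rfl⟩
  exact ⟨Y, hY, rfl⟩

theorem stmt6_general {d l m : ℕ}
    (Q : Fin l → Fin m → Matrix (Fin d) (Fin d) ℂ)
    (hdet : DeterminesPure Q) :
    ∃ ε > (0 : ℝ), ∀ Q' : Fin l → Fin m → Matrix (Fin d) (Fin d) ℂ, IsMeasScheme Q' →
      opNormHerm (fun X => measMap Q X - measMap Q' X) < ε → DeterminesPure Q' := by
  obtain ⟨ε, hε, hmin⟩ := (isCompact_pureDiffDirections d).exists_forall_le'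
    (continuous_frobNorm.comp (continuous_measMap Q)).continuousOn
    fun X hX => frobNorm_pos ((determinesPure_iff Q).mp hdet X hX)
  refine ⟨ε, hε, fun Q' _ hQ' => (determinesPure_iff Q').mpr fun X hX hX0 => ?_⟩
  have hdiff := frobNorm_le_opNormHerm (T := fun X => measMap Q X - measMap Q' X)
    ((continuous_measMap Q).sub (continuous_measMap Q'))
    (isHermitian_of_mem_pureDiffDirections hX) hX.2.1
  rw [hX0, sub_zero] at hdiff
  exact (hdiff.trans_lt hQ').not_ge (hmin X hX)

theorem stmt6 {d l m : ℕ}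
    (Q : Fin l → Fin m → Matrix (Fin d) (Fin d) ℂ) (hQ : IsMeasScheme Q)
    (hdet : DeterminesPure Q) :
    ∃ ε > (0 : ℝ), ∀ Q' : Fin l → Fin m → Matrix (Fin d) (Fin d) ℂ, IsMeasScheme Q' →
      opNormHerm (fun X => measMap Q X - measMap Q' X) < ε → DeterminesPure Q' :=
  stmt6_general Q hdet
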